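/- (Eigenstructure of the single-cell Kronecker stiffness matrix, key step in the single-cell CFL bound.) Let Ŵ : Matrix (Fin 2) (Fin 2) ℝ := !![1, -1; -1, 1] and let a, b, c be nonnegative reals. Define A := a • (1 ⊗ₖ 1 ⊗ₖ Ŵ) + b • (1 ⊗ₖ Ŵ ⊗ₖ 1) + c • (Ŵ ⊗ₖ 1 ⊗ₖ 1), a real matrix indexed by Fin 2 × Fin 2 × Fin 2, where 1 is the 2×2 identity and ⊗ₖ the Kronecker product. Then A is symmetric positive semidefinite, every eigenvalue μ ∈ spectrum ℝ A satisfies 0 ≤ μ ≤ 2*(a + b + c), and 2*(a + b + c) ∈ spectrum ℝ A. -/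

import Mathlib

open Matrix Kronecker

noncomputable section

/-- Triple Kronecker product with indices identified with `α × β × γ`. -/
def kron3 {α β γ : Type*} (A : Matrix α α ℝ) (B : Matrix β β ℝ) (C : Matrix γ γ ℝ) :
    Matrix (α × β × γ) (α × β × γ) ℝ :=
  Matrix.reindex (Equiv.prodAssoc α β γ) (Equiv.prodAssoc α β γ) (A ⊗ₖ B ⊗ₖ C)

/-! Since `Ŵ = u uᵀ` with `u = (1, -1)` and `2 - Ŵ = v vᵀ` with `v = (1, 1)`, both `Ŵ` and
`2 - Ŵ` are positive semidefinite. Kronecker products with identities and nonnegative combinations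
preserve this, so `A` and `2(a + b + c) - A` are positive semidefinite, which confines the
spectrum of `A` to `[0, 2(a + b + c)]`; the top of the interval is attained at `u ⊗ u ⊗ u`. -/

namespace Matrix

lemma mem_spectrum_of_mulVec_eq_smul {R n : Type*} [CommRing R] [Fintype n] [DecidableEq n]
    {M : Matrix n n R} {v : n → R} {μ : R} (hv : v ≠ 0) (h : M *ᵥ v = μ • v) :
    μ ∈ spectrum R M := by
  rw [← spectrum_toLin']
  exact (Module.End.hasEigenvalue_of_hasEigenvector
    ⟨Module.End.mem_eigenspace_iff.2 h, hv⟩).mem_spectrum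

open scoped ComplexOrder in
lemma spectrum_subset_Icc_of_posSemidef {𝕜 n : Type*} [RCLike 𝕜] [Fintype n]
    [DecidableEq n] {M : Matrix n n 𝕜} {r : 𝕜} (hM : M.PosSemidef)
    (hrM : (r • 1 - M).PosSemidef) : spectrum 𝕜 M ⊆ Set.Icc 0 r := by
  intro μ hμ
  have hr : r - μ ∈ spectrum 𝕜 (r • 1 - M) := by
    rw [← Algebra.algebraMap_eq_smul_one, ← spectrum.singleton_sub_eq]
    exact Set.sub_mem_sub rfl hμ
  exact ⟨(posSemidef_iff_isHermitian_and_spectrum_nonneg.1 hM).2 hμ,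
    sub_nonneg.1 ((posSemidef_iff_isHermitian_and_spectrum_nonneg.1 hrM).2 hr)⟩

variable {α β γ : Type*}

lemma kron3_apply (A : Matrix α α ℝ) (B : Matrix β β ℝ) (C : Matrix γ γ ℝ)
    (i i' : α) (j j' : β) (k k' : γ) :
    kron3 A B C (i, j, k) (i', j', k') = A i i' * B j j' * C k k' := rfl

lemma PosSemidef.kron3 [Finite α] [Finite β] [Finite γ] {A : Matrix α α ℝ}
    {B : Matrix β β ℝ} {C : Matrix γ γ ℝ} (hA : A.PosSemidef) (hB : B.PosSemidef)
    (hC : C.PosSemidef) : (_root_.kron3 A B C).PosSemidef :=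
  ((hA.kronecker hB).kronecker hC).submatrix _

def kronVec3 (x : α → ℝ) (y : β → ℝ) (z : γ → ℝ) : α × β × γ → ℝ :=
  fun p => x p.1 * y p.2.1 * z p.2.2

lemma kronVec3_ne_zero {x : α → ℝ} {y : β → ℝ} {z : γ → ℝ} (hx : x ≠ 0) (hy : y ≠ 0)
    (hz : z ≠ 0) : kronVec3 x y z ≠ 0 := by
  obtain ⟨i, hi⟩ := Function.ne_iff.1 hx
  obtain ⟨j, hj⟩ := Function.ne_iff.1 hy
  obtain ⟨k, hk⟩ := Function.ne_iff.1 hz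
  exact Function.ne_iff.2 ⟨(i, j, k), by simp_all [kronVec3]⟩

lemma kron3_mulVec_kronVec3 [Fintype α] [Fintype β] [Fintype γ] (A : Matrix α α ℝ)
    (B : Matrix β β ℝ) (C : Matrix γ γ ℝ) (x : α → ℝ) (y : β → ℝ) (z : γ → ℝ) :
    kron3 A B C *ᵥ kronVec3 x y z = kronVec3 (A *ᵥ x) (B *ᵥ y) (C *ᵥ z) := by
  ext ⟨i, j, k⟩
  simp only [mulVec, dotProduct, kronVec3, kron3_apply, Fintype.sum_prod_type,
    Finset.sum_mul, Finset.mul_sum]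
  conv_rhs => rw [Finset.sum_comm]; enter [2, _]; rw [Finset.sum_comm]
  rw [Finset.sum_comm]
  refine Finset.sum_congr rfl fun _ _ => Finset.sum_congr rfl fun _ _ =>
    Finset.sum_congr rfl fun _ _ => ?_
  ring

variable {n : Type*} [DecidableEq n]

def kronSum3 (a b c : ℝ) (W : Matrix n n ℝ) : Matrix (n × n × n) (n × n × n) ℝ :=
  a • kron3 1 1 W + b • kron3 1 W 1 + c • kron3 W 1 1

lemma PosSemidef.kronSum3 [Finite n] {W : Matrix n n ℝ} (hW : W.PosSemidef) {a b c : ℝ}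
    (ha : 0 ≤ a) (hb : 0 ≤ b) (hc : 0 ≤ c) : (kronSum3 a b c W).PosSemidef :=
  have h1 : (1 : Matrix n n ℝ).PosSemidef := PosSemidef.one
  (((h1.kron3 h1 hW).smul ha).add ((h1.kron3 hW h1).smul hb)).add ((hW.kron3 h1 h1).smul hc)

lemma smul_one_sub_kronSum3 (r a b c : ℝ) (W : Matrix n n ℝ) :
    (r * (a + b + c)) • (1 : Matrix (n × n × n) (n × n × n) ℝ) - kronSum3 a b c W =
      kronSum3 a b c (r • 1 - W) := by
  ext ⟨i, j, k⟩ ⟨i', j', k'⟩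
  simp only [kronSum3, kron3_apply, sub_apply, add_apply, smul_apply, one_apply, smul_eq_mul,
    Prod.mk.injEq]
  split_ifs <;> simp_all
  ring

lemma kronSum3_mulVec_kronVec3 [Fintype n] {W : Matrix n n ℝ} {u : n → ℝ} {l : ℝ}
    (hu : W *ᵥ u = l • u) (a b c : ℝ) :
    kronSum3 a b c W *ᵥ kronVec3 u u u = (l * (a + b + c)) • kronVec3 u u u := by
  ext p
  simp only [kronSum3, add_mulVec, smul_mulVec, kron3_mulVec_kronVec3, one_mulVec, hu]
  simp only [kronVec3, Pi.add_apply, Pi.smul_apply, smul_eq_mul]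
  ring

end Matrix

local notation "Ŵ" => (!![1, -1; -1, 1] : Matrix (Fin 2) (Fin 2) ℝ)

lemma posSemidef_W_hat : (Ŵ).PosSemidef := by
  convert Matrix.posSemidef_vecMulVec_self_star ![(1 : ℝ), -1] using 1
  ext i j
  fin_cases i <;> fin_cases j <;> simp [Matrix.vecMulVec]

lemma posSemidef_two_smul_one_sub_W_hat : ((2 : ℝ) • 1 - Ŵ).PosSemidef := by
  convert Matrix.posSemidef_vecMulVec_self_star ![(1 : ℝ), 1] using 1
  ext i j
  fin_cases i <;> fin_cases j <;> norm_num [Matrix.vecMulVec]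

lemma W_hat_mulVec_alternating : Ŵ *ᵥ ![1, -1] = (2 : ℝ) • ![1, -1] := by
  ext i
  fin_cases i <;> norm_num [Matrix.mulVec, dotProduct]

theorem fdtdq_single_cell_stiffness_eigenstructure
    (a b c : ℝ) (ha : 0 ≤ a) (hb : 0 ≤ b) (hc : 0 ≤ c) :
    (a • kron3 (1 : Matrix (Fin 2) (Fin 2) ℝ) (1 : Matrix (Fin 2) (Fin 2) ℝ) (!![1, -1; -1, 1])
      + b • kron3 (1 : Matrix (Fin 2) (Fin 2) ℝ) (!![1, -1; -1, 1]) (1 : Matrix (Fin 2) (Fin 2) ℝ)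
      + c • kron3 (!![1, -1; -1, 1]) (1 : Matrix (Fin 2) (Fin 2) ℝ)
          (1 : Matrix (Fin 2) (Fin 2) ℝ)).PosSemidef
    ∧ (∀ μ ∈ spectrum ℝ
        (a • kron3 (1 : Matrix (Fin 2) (Fin 2) ℝ) (1 : Matrix (Fin 2) (Fin 2) ℝ) (!![1, -1; -1, 1])
          + b • kron3 (1 : Matrix (Fin 2) (Fin 2) ℝ) (!![1, -1; -1, 1]) (1 : Matrix (Fin 2) (Fin 2) ℝ)
          + c • kron3 (!![1, -1; -1, 1]) (1 : Matrix (Fin 2) (Fin 2) ℝ)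
              (1 : Matrix (Fin 2) (Fin 2) ℝ)),
        0 ≤ μ ∧ μ ≤ 2*(a + b + c))
    ∧ (2*(a + b + c)) ∈ spectrum ℝ
        (a • kron3 (1 : Matrix (Fin 2) (Fin 2) ℝ) (1 : Matrix (Fin 2) (Fin 2) ℝ) (!![1, -1; -1, 1])
          + b • kron3 (1 : Matrix (Fin 2) (Fin 2) ℝ) (!![1, -1; -1, 1]) (1 : Matrix (Fin 2) (Fin 2) ℝ)
          + c • kron3 (!![1, -1; -1, 1]) (1 : Matrix (Fin 2) (Fin 2) ℝ)
              (1 : Matrix (Fin 2) (Fin 2) ℝ)) := by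
  have hA : (kronSum3 a b c Ŵ).PosSemidef := posSemidef_W_hat.kronSum3 ha hb hc
  have hA' : ((2 * (a + b + c)) • 1 - kronSum3 a b c Ŵ).PosSemidef := by
    rw [smul_one_sub_kronSum3]
    exact posSemidef_two_smul_one_sub_W_hat.kronSum3 ha hb hc
  have hu : ![(1 : ℝ), -1] ≠ 0 := fun h => by simpa using congrFun h 0
  exact ⟨hA, fun μ hμ => spectrum_subset_Icc_of_posSemidef hA hA' hμ,
    mem_spectrum_of_mulVec_eq_smul (kronVec3_ne_zero hu hu hu)
      (kronSum3_mulVec_kronVec3 W_hat_mulVec_alternating a b c)⟩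

end
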